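/- arXiv:1704.03540 — 2 statements merged into one kernel-verified Lean document; each statement's English description precedes it below -/
import Mathlib

section
/- For every t ∈ ℕ and every C ≥ 0, if Σ_{k=(t−s)_+}^{t−1} ‖x(k+1) − x(k)‖ ≤ C·‖x(t+1) − x(t)‖, then F(x(t+1)) + (1/2)(1/η − L − 2√p·C·L)·‖x(t+1) − x(t)‖² ≤ F(x(t)). -/
open Filter Topology

noncomputable abbrev EE (p : ℕ) (d : Fin p → ℕ) : Type :=
  PiLp 2 (fun i : Fin p => EuclideanSpace ℝ (Fin (d i)))

/-!
Write `Δ = x(t+1) - x(t)`. Each block update is a proximal step, so comparing its objective with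
the choice `z = x_i(t)` gives `g_i(x_i(t+1)) + ‖Δ_i‖²/(2η) + ⟪Δ_i, ∇_i f(x^i(t))⟫ ≤ g_i(x_i(t))`.
Summing over the blocks and adding the descent lemma for `f` leaves the error `⟪Δ, ∇f(x(t)) - v⟫`,
where `v` collects the delayed partial gradients. Each block of `∇f(x(t)) - v` is bounded by
`L ‖x(t) - x^i(t)‖`, and since every delay is at most `s`, telescoping bounds `‖x(t) - x^i(t)‖` by
the sum of the last `s` steps, hence by `C ‖Δ‖`; over `p` blocks this costs the factor `√p`.
Everything is done in `EReal`, where adding a real number is monotone and can be undone.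
-/

open scoped InnerProductSpace

namespace EReal

theorem add_coe_sub_le_of_add_coe_le {a b : EReal} {r q : ℝ} (h : a + r ≤ b + q) :
    a + ((r - q : ℝ) : EReal) ≤ b := by
  calc a + ((r - q : ℝ) : EReal) = a + r + ((-q : ℝ) : EReal) := by
        rw [add_assoc, ← coe_add, sub_eq_add_neg]
    _ ≤ b + q + ((-q : ℝ) : EReal) := add_le_add_left h _
    _ = b := by rw [add_assoc, ← coe_add, add_neg_cancel, coe_zero, add_zero]

theorem coe_finset_sum {ι : Type*} (s : Finset ι) (r : ι → ℝ) :
    ((∑ i ∈ s, r i : ℝ) : EReal) = ∑ i ∈ s, (r i : EReal) :=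
  map_sum (⟨⟨(↑), coe_zero⟩, coe_add⟩ : ℝ →+ EReal) r s

theorem sum_add_coe_sum_le_sum {ι : Type*} {s : Finset ι} {a b : ι → EReal} {r : ι → ℝ}
    (h : ∀ i ∈ s, a i + r i ≤ b i) :
    ∑ i ∈ s, a i + ((∑ i ∈ s, r i : ℝ) : EReal) ≤ ∑ i ∈ s, b i := by
  rw [coe_finset_sum, ← Finset.sum_add_distrib]
  exact Finset.sum_le_sum h

end EReal

section InnerProductSpace

variable {E : Type*} [NormedAddCommGroup E] [InnerProductSpace ℝ E]

theorem one_div_two_mul_norm_sub_sub_smul_sq_sub {η : ℝ} (hη : η ≠ 0) (x y v : E) :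
    1 / (2 * η) * ‖y - (x - η • v)‖ ^ 2 - 1 / (2 * η) * ‖x - (x - η • v)‖ ^ 2
      = 1 / (2 * η) * ‖y - x‖ ^ 2 + ⟪y - x, v⟫_ℝ := by
  rw [show y - (x - η • v) = (y - x) + η • v by abel, sub_sub_cancel, norm_add_sq_real,
    real_inner_smul_right]
  field_simp
  ring

theorem prox_step_le {a b : EReal} {η : ℝ} (hη : η ≠ 0) {x y v : E}
    (h : a + ((1 / (2 * η) * ‖y - (x - η • v)‖ ^ 2 : ℝ) : EReal)
      ≤ b + ((1 / (2 * η) * ‖x - (x - η • v)‖ ^ 2 : ℝ) : EReal)) :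
    a + ((1 / (2 * η) * ‖y - x‖ ^ 2 + ⟪y - x, v⟫_ℝ : ℝ) : EReal) ≤ b := by
  rw [← one_div_two_mul_norm_sub_sub_smul_sq_sub hη]
  exact EReal.add_coe_sub_le_of_add_coe_le h

variable [CompleteSpace E] {f : E → ℝ} {f' : E → E} {L : ℝ}

theorem le_add_inner_add_of_lipschitz_gradient (hf : ∀ y, HasGradientAt f (f' y) y)
    (hlip : ∀ y z, ‖f' y - f' z‖ ≤ L * ‖y - z‖) (a b : E) :
    f b ≤ f a + ⟪f' a, b - a⟫_ℝ + L / 2 * ‖b - a‖ ^ 2 := by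
  set Δ := b - a
  have hpath : ∀ θ : ℝ, HasDerivAt (fun θ : ℝ => f (a + θ • Δ)) ⟪f' (a + θ • Δ), Δ⟫_ℝ θ :=
    fun θ => (hf _).hasFDerivAt.comp_hasDerivAt θ
      (by simpa using ((hasDerivAt_id θ).smul_const Δ).const_add a)
  have hbound : ∀ θ : ℝ,
      HasDerivAt (fun θ : ℝ => f a + θ * ⟪f' a, Δ⟫_ℝ + L / 2 * θ ^ 2 * ‖Δ‖ ^ 2)
        (⟪f' a, Δ⟫_ℝ + L * θ * ‖Δ‖ ^ 2) θ := by
    intro θ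
    refine ((((hasDerivAt_id θ).mul_const _).const_add (f a)).add
      (((hasDerivAt_pow 2 θ).const_mul (L / 2)).mul_const _)).congr_deriv ?_
    simp only [Nat.cast_ofNat]
    ring
  have hslope : ∀ θ : ℝ, 0 ≤ θ → ⟪f' (a + θ • Δ), Δ⟫_ℝ ≤ ⟪f' a, Δ⟫_ℝ + L * θ * ‖Δ‖ ^ 2 := by
    intro θ hθ
    have := real_inner_le_norm (f' (a + θ • Δ) - f' a) Δ
    have hdist := hlip (a + θ • Δ) a
    rw [add_sub_cancel_left, norm_smul, Real.norm_of_nonneg hθ] at hdist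
    rw [inner_sub_left] at this
    nlinarith [norm_nonneg Δ]
  have := image_le_of_deriv_right_le_deriv_boundary (a := 0) (b := 1)
    (fun θ _ => (hpath θ).continuousAt.continuousWithinAt) (fun θ _ => (hpath θ).hasDerivWithinAt)
    (by simp) (fun θ _ => (hbound θ).continuousAt.continuousWithinAt)
    (fun θ _ => (hbound θ).hasDerivWithinAt) (fun θ hθ => hslope θ hθ.1)
    (x := 1) ⟨zero_le_one, le_rfl⟩
  simpa [Δ] using this

theorem coe_add_add_le_of_inexact_prox_grad (hf : ∀ y, HasGradientAt f (f' y) y)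
    (hlip : ∀ y z, ‖f' y - f' z‖ ≤ L * ‖y - z‖) {G : E → EReal} {a b v : E} {η κ : ℝ}
    (hv : ‖f' a - v‖ ≤ κ * ‖b - a‖)
    (hG : G b + ((1 / (2 * η) * ‖b - a‖ ^ 2 + ⟪b - a, v⟫_ℝ : ℝ) : EReal) ≤ G a) :
    (f b : EReal) + G b + ((1 / 2 * (1 / η - L - 2 * κ) * ‖b - a‖ ^ 2 : ℝ) : EReal)
      ≤ (f a : EReal) + G a := by
  set r := 1 / (2 * η) * ‖b - a‖ ^ 2 + ⟪b - a, v⟫_ℝ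
  set c := 1 / 2 * (1 / η - L - 2 * κ) * ‖b - a‖ ^ 2
  have herror : ⟪f' a, b - a⟫_ℝ - ⟪b - a, v⟫_ℝ ≤ κ * ‖b - a‖ ^ 2 := by
    rw [real_inner_comm, ← inner_sub_right]
    calc ⟪b - a, f' a - v⟫_ℝ ≤ ‖b - a‖ * ‖f' a - v‖ := real_inner_le_norm _ _
      _ ≤ ‖b - a‖ * (κ * ‖b - a‖) := mul_le_mul_of_nonneg_left hv (norm_nonneg _)
      _ = κ * ‖b - a‖ ^ 2 := by ring
  have hreal : f b + c - r ≤ f a := by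
    have := le_add_inner_add_of_lipschitz_gradient hf hlip a b
    simp only [c, r, ← one_div_mul_one_div]
    linarith
  calc (f b : EReal) + G b + (c : EReal) = G b + r + ((f b + c - r : ℝ) : EReal) := by
        rw [add_assoc (G b), ← EReal.coe_add, add_sub_cancel, EReal.coe_add]
        ac_rfl
    _ ≤ G a + f a := add_le_add hG (EReal.coe_le_coe_iff.2 hreal)
    _ = f a + G a := add_comm _ _

end InnerProductSpace

namespace PiLp

variable {ι : Type*} [Fintype ι]

section Seminormed

variable {β : ι → Type*} [∀ i, SeminormedAddCommGroup (β i)]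

theorem norm_le_norm_of_forall_norm_apply_le {u w : PiLp 2 β} (h : ∀ i, ‖u i‖ ≤ ‖w i‖) :
    ‖u‖ ≤ ‖w‖ := by
  rw [← sq_le_sq₀ (norm_nonneg _) (norm_nonneg _), norm_sq_eq_of_L2, norm_sq_eq_of_L2]
  exact Finset.sum_le_sum fun i _ => pow_le_pow_left₀ (norm_nonneg _) (h i) 2

theorem norm_le_sqrt_card_mul {u : PiLp 2 β} {c : ℝ} (hc : 0 ≤ c) (h : ∀ i, ‖u i‖ ≤ c) :
    ‖u‖ ≤ √(Fintype.card ι) * c := by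
  rw [← Real.sqrt_sq hc, ← Real.sqrt_mul (Nat.cast_nonneg _), Real.le_sqrt (norm_nonneg _)
    (by positivity), norm_sq_eq_of_L2]
  calc ∑ i, ‖u i‖ ^ 2 ≤ ∑ _i : ι, c ^ 2 :=
        Finset.sum_le_sum fun i _ => pow_le_pow_left₀ (norm_nonneg _) (h i) 2
    _ = Fintype.card ι * c ^ 2 := by simp

theorem norm_sub_le_sum_norm_sub_of_delay (X : ℕ → PiLp 2 β) {y : PiLp 2 β} {τ : ι → ℕ}
    (hy : ∀ i, y i = X (τ i) i) {m n : ℕ} (hmn : m ≤ n) (hm : ∀ i, m ≤ τ i) (hn : ∀ i, τ i ≤ n) :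
    ‖X n - y‖ ≤ ∑ k ∈ Finset.Ico m n, ‖X (k + 1) - X k‖ := by
  -- `v k` advances each block from its delayed value to time `k`, one step at a time.
  let v : ℕ → PiLp 2 β := fun k => WithLp.toLp 2 fun i => X (max (τ i) k) i
  have hvm : v m = y := PiLp.ext fun i => by simp [v, max_eq_left (hm i), hy]
  have hvn : v n = X n := PiLp.ext fun i => by simp [v, max_eq_right (hn i)]
  have hstep : ∀ k, dist (v k) (v (k + 1)) ≤ ‖X (k + 1) - X k‖ := fun k => by
    rw [dist_comm, dist_eq_norm]
    refine norm_le_norm_of_forall_norm_apply_le fun i => ?_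
    rcases le_or_gt (τ i) k with hk | hk
    · simp [v, max_eq_right hk, max_eq_right (hk.trans k.le_succ)]
    · simp [v, max_eq_left hk.le, max_eq_left (Nat.succ_le_of_lt hk)]
  calc ‖X n - y‖ = dist (v m) (v n) := by rw [hvm, hvn, dist_comm, dist_eq_norm]
    _ ≤ ∑ k ∈ Finset.Ico m n, ‖X (k + 1) - X k‖ :=
      (dist_le_Ico_sum_dist v hmn).trans (Finset.sum_le_sum fun k _ => hstep k)

end Seminormed

variable {β : ι → Type*} [∀ i, NormedAddCommGroup (β i)] [∀ i, InnerProductSpace ℝ (β i)]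

theorem sum_add_coe_le_sum_of_forall {G : (i : ι) → β i → EReal} {a b v : PiLp 2 β} {c : ℝ}
    (h : ∀ i, G i (b i) + ((c * ‖b i - a i‖ ^ 2 + ⟪b i - a i, v i⟫_ℝ : ℝ) : EReal) ≤ G i (a i)) :
    ∑ i, G i (b i) + ((c * ‖b - a‖ ^ 2 + ⟪b - a, v⟫_ℝ : ℝ) : EReal) ≤ ∑ i, G i (a i) := by
  have hsum : c * ‖b - a‖ ^ 2 + ⟪b - a, v⟫_ℝ
      = ∑ i, (c * ‖b i - a i‖ ^ 2 + ⟪b i - a i, v i⟫_ℝ) := by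
    simp [norm_sq_eq_of_L2, inner_apply, Finset.sum_add_distrib, Finset.mul_sum]
  rw [hsum]
  exact EReal.sum_add_coe_sum_le_sum fun i _ => h i

end PiLp

theorem stmt_16_general
    (p s : ℕ) (d : Fin p → ℕ)
    (τ : Fin p → Fin p → ℕ → ℕ)
    (hτ_le : ∀ i j t, τ i j t ≤ t)
    (hτ_ge : ∀ i j t, t ≤ τ i j t + s)
    (x : (i : Fin p) → ℕ → EuclideanSpace ℝ (Fin (d i)))
    (X : ℕ → EE p d) (hX : ∀ t i, X t i = x i t)
    (Xl : Fin p → ℕ → EE p d) (hXl : ∀ i t j, Xl i t j = x j (τ i j t))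
    (T : Fin p → Set ℕ)
    (η L : ℝ) (hη : 0 < η) (hL : 0 < L)
    (f : EE p d → ℝ) (f' : EE p d → EE p d)
    (hf : ∀ y, HasGradientAt f (f' y) y)
    (hlip : ∀ y z, ‖f' y - f' z‖ ≤ L * ‖y - z‖)
    (g : (i : Fin p) → EuclideanSpace ℝ (Fin (d i)) → EReal)
    (F : EE p d → EReal)
    (hF : ∀ y, F y = (f y : EReal) + ∑ i, g i (y i))
    (hskip : ∀ i t, t ∉ T i → x i (t + 1) = x i t)
    (hupd : ∀ i t, t ∈ T i → ∀ z : EuclideanSpace ℝ (Fin (d i)),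
      g i (x i (t + 1)) +
        ((1 / (2 * η) * ‖x i (t + 1) - (x i t - η • f' (Xl i t) i)‖ ^ 2 : ℝ) : EReal)
      ≤ g i z + ((1 / (2 * η) * ‖z - (x i t - η • f' (Xl i t) i)‖ ^ 2 : ℝ) : EReal))
    :
    ∀ (t : ℕ) (C : ℝ), 0 ≤ C →
      (∑ k ∈ Finset.Ico (t - s) t, ‖X (k + 1) - X k‖) ≤ C * ‖X (t + 1) - X t‖ →
      F (X (t + 1)) +
        ((1 / 2 * (1 / η - L - 2 * Real.sqrt p * C * L) * ‖X (t + 1) - X t‖ ^ 2 : ℝ) : EReal)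
      ≤ F (X t) := by
  intro t C hC hsum
  let v : EE p d := WithLp.toLp 2 fun i => f' (Xl i t) i
  have hdelay : ∀ i, ‖X t - Xl i t‖ ≤ C * ‖X (t + 1) - X t‖ := fun i =>
    (PiLp.norm_sub_le_sum_norm_sub_of_delay X (fun j => by rw [hXl, hX]) (Nat.sub_le t s)
      (fun j => by have := hτ_ge i j t; omega) fun j => hτ_le i j t).trans hsum
  have hv : ‖f' (X t) - v‖ ≤ √p * C * L * ‖X (t + 1) - X t‖ := by
    refine (PiLp.norm_le_sqrt_card_mul (c := L * (C * ‖X (t + 1) - X t‖)) (by positivity)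
      fun i => ?_).trans_eq (by rw [Fintype.card_fin]; ring)
    calc ‖(f' (X t) - v) i‖ = ‖(f' (X t) - f' (Xl i t)) i‖ := by simp [v]
      _ ≤ ‖f' (X t) - f' (Xl i t)‖ := PiLp.norm_apply_le _ i
      _ ≤ L * (C * ‖X (t + 1) - X t‖) :=
        (hlip _ _).trans (mul_le_mul_of_nonneg_left (hdelay i) hL.le)
  have hblock : ∀ i, g i (X (t + 1) i) + ((1 / (2 * η) * ‖X (t + 1) i - X t i‖ ^ 2
      + ⟪X (t + 1) i - X t i, v i⟫_ℝ : ℝ) : EReal) ≤ g i (X t i) := by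
    intro i
    simp only [hX, v]
    by_cases hi : t ∈ T i
    · exact prox_step_le hη.ne' (hupd i t hi (x i t))
    · simp [hskip i t hi]
  rw [hF, hF, show 2 * √p * C * L = 2 * (√p * C * L) by ring]
  exact coe_add_add_le_of_inexact_prox_grad (G := fun y => ∑ i, g i (y i)) hf hlip hv
    (PiLp.sum_add_coe_le_sum_of_forall hblock)

theorem stmt_16
    (p s : ℕ) (hp : 1 ≤ p) (d : Fin p → ℕ) (hd : ∀ i, 1 ≤ d i)
    (τ : Fin p → Fin p → ℕ → ℕ)
    (hτ_le : ∀ i j t, τ i j t ≤ t)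
    (hτ_ge : ∀ i j t, t ≤ τ i j t + s)
    (hτ_self : ∀ i t, τ i i t = t)
    (x : (i : Fin p) → ℕ → EuclideanSpace ℝ (Fin (d i)))
    (X : ℕ → EE p d) (hX : ∀ t i, X t i = x i t)
    (Xl : Fin p → ℕ → EE p d) (hXl : ∀ i t j, Xl i t j = x j (τ i j t))
    (T : Fin p → Set ℕ)
    (hT : ∀ i t, ∃ k ∈ T i, t ≤ k ∧ k ≤ t + s)
    (η L : ℝ) (hη : 0 < η) (hL : 0 < L)
    (f : EE p d → ℝ) (f' : EE p d → EE p d)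
    (hf : ∀ y, HasGradientAt f (f' y) y)
    (hlip : ∀ y z, ‖f' y - f' z‖ ≤ L * ‖y - z‖)
    (g : (i : Fin p) → EuclideanSpace ℝ (Fin (d i)) → EReal)
    (hg_nebot : ∀ i z, g i z ≠ ⊥)
    (hg_proper : ∀ i, ∃ z, g i z ≠ ⊤)
    (hg_lsc : ∀ i, LowerSemicontinuous (g i))
    (F : EE p d → EReal)
    (hF : ∀ y, F y = (f y : EReal) + ∑ i, g i (y i))
    (hF_bdd : ∃ m : ℝ, ∀ y, (m : EReal) ≤ F y)
    (hF0 : F (X 0) < ⊤)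
    (hskip : ∀ i t, t ∉ T i → x i (t + 1) = x i t)
    (hupd : ∀ i t, t ∈ T i → ∀ z : EuclideanSpace ℝ (Fin (d i)),
      g i (x i (t + 1)) +
        ((1 / (2 * η) * ‖x i (t + 1) - (x i t - η • f' (Xl i t) i)‖ ^ 2 : ℝ) : EReal)
      ≤ g i z + ((1 / (2 * η) * ‖z - (x i t - η • f' (Xl i t) i)‖ ^ 2 : ℝ) : EReal))
    :
    ∀ (t : ℕ) (C : ℝ), 0 ≤ C →
      (∑ k ∈ Finset.Ico (t - s) t, ‖X (k + 1) - X k‖) ≤ C * ‖X (t + 1) - X t‖ →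
      F (X (t + 1)) +
        ((1 / 2 * (1 / η - L - 2 * Real.sqrt p * C * L) * ‖X (t + 1) - X t‖ ^ 2 : ℝ) : EReal)
      ≤ F (X t) :=
  stmt_16_general p s d τ hτ_le hτ_ge x X hX Xl hXl T η L hη hL f f' hf hlip g F hF hskip hupd
end

section
/- Let H be a finite-dimensional real inner product space, and let f, g : H → ℝ be differentiable with ∇f L_f-Lipschitz continuous and ∇g L_g-Lipschitz continuous (L_f, L_g > 0). Let 0 < η < 1/L_g. Let x, z ∈ H, let u be a global minimizer over w ∈ H of g(w) + (1/(2η))‖w − (x − η∇f(x))‖², and let v be a global minimizer over w ∈ H of g(w) + (1/(2η))‖w − (z − η∇f(z))‖². Then ‖(u − x) − (v − z)‖ ≤ (η(L_f + L_g)/(1 − ηL_g))·‖x − z‖. -/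
/-! At a global minimizer `u` of `g w + ‖w - (x - η ∇f x)‖² / (2η)` the gradient
vanishes, so `u - x = -η (∇f x + ∇g u)`. Subtracting the same identity at `z` and using the
Lipschitz bounds, `D = (u - x) - (v - z)` satisfies
`‖D‖ ≤ η (L_f ‖x - z‖ + L_g ‖u - v‖) ≤ η (L_f ‖x - z‖ + L_g (‖D‖ + ‖x - z‖))`,
and `η L_g < 1` lets one solve for `‖D‖`. -/

open Filter Topology

section

variable {H : Type*} [NormedAddCommGroup H] [InnerProductSpace ℝ H] [CompleteSpace H]

theorem hasGradientAt_norm_sub_sq (c u : H) :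
    HasGradientAt (fun w => ‖w - c‖ ^ 2) ((2 : ℝ) • (u - c)) u :=
  ((hasFDerivAt_id u).sub_const c).norm_sq.congr_fderiv <| by
    ext w
    simp

theorem sub_eq_neg_smul_of_isLocalMin_add_norm_sub_sq {g : H → ℝ} {G c u : H} {η : ℝ}
    (hη : η ≠ 0) (hg : HasGradientAt g G u)
    (hmin : IsLocalMin (fun w => g w + 1 / (2 * η) * ‖w - c‖ ^ 2) u) :
    u - c = -(η • G) := by
  have hzero : G + η⁻¹ • (u - c) = 0 := by
    have h := hmin.hasFDerivAt_eq_zero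
      (hg.hasFDerivAt.add ((hasGradientAt_norm_sub_sq c u).hasFDerivAt.const_mul (1 / (2 * η))))
    rw [← map_smul, ← map_add, LinearIsometryEquiv.map_eq_zero_iff, smul_smul] at h
    rwa [show 1 / (2 * η) * 2 = η⁻¹ by field_simp] at h
  rw [← smul_neg, neg_eq_of_add_eq_zero_right hzero, smul_smul, mul_inv_cancel₀ hη, one_smul]

theorem sub_eq_neg_smul_add_of_forall_le_add_norm_sub_sq {g : H → ℝ} {F G x u : H} {η : ℝ}
    (hη : η ≠ 0) (hg : HasGradientAt g G u)
    (hu : ∀ w, g u + 1 / (2 * η) * ‖u - (x - η • F)‖ ^ 2 ≤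
      g w + 1 / (2 * η) * ‖w - (x - η • F)‖ ^ 2) :
    u - x = -(η • (F + G)) := by
  have h := sub_eq_neg_smul_of_isLocalMin_add_norm_sub_sq hη hg
    (IsMinOn.isLocalMin (fun w _ => hu w) univ_mem)
  linear_combination (norm := module) h

end

theorem stmt_17_general
    (H : Type*) [NormedAddCommGroup H] [InnerProductSpace ℝ H] [FiniteDimensional ℝ H]
    (g : H → ℝ) (f' g' : H → H) (Lf Lg : ℝ)
    (hg : ∀ y, HasGradientAt g (g' y) y)
    (hf_lip : ∀ y z, ‖f' y - f' z‖ ≤ Lf * ‖y - z‖)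
    (hg_lip : ∀ y z, ‖g' y - g' z‖ ≤ Lg * ‖y - z‖)
    (η : ℝ) (hη : 0 < η) (hη' : η < 1 / Lg)
    (x z u v : H)
    (hu : ∀ w, g u + 1 / (2 * η) * ‖u - (x - η • f' x)‖ ^ 2 ≤
      g w + 1 / (2 * η) * ‖w - (x - η • f' x)‖ ^ 2)
    (hv : ∀ w, g v + 1 / (2 * η) * ‖v - (z - η • f' z)‖ ^ 2 ≤
      g w + 1 / (2 * η) * ‖w - (z - η • f' z)‖ ^ 2) :
    ‖(u - x) - (v - z)‖ ≤ η * (Lf + Lg) / (1 - η * Lg) * ‖x - z‖ := by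
  have hLg : 0 < Lg := one_div_pos.mp (hη.trans hη')
  have hηLg : η * Lg < 1 := by simpa using (lt_div_iff₀ hLg).mp hη'
  have hdiff : (u - x) - (v - z) = η • ((f' z - f' x) + (g' v - g' u)) := by
    rw [sub_eq_neg_smul_add_of_forall_le_add_norm_sub_sq hη.ne' (hg u) hu,
      sub_eq_neg_smul_add_of_forall_le_add_norm_sub_sq hη.ne' (hg v) hv]
    module
  have huv : ‖u - v‖ ≤ ‖(u - x) - (v - z)‖ + ‖x - z‖ := by
    rw [show u - v = ((u - x) - (v - z)) + (x - z) by abel]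
    exact norm_add_le _ _
  have hA : ‖(u - x) - (v - z)‖ ≤
      η * (Lf * ‖x - z‖ + Lg * (‖(u - x) - (v - z)‖ + ‖x - z‖)) := calc
    ‖(u - x) - (v - z)‖ = η * ‖(f' z - f' x) + (g' v - g' u)‖ := by
      rw [hdiff, norm_smul, Real.norm_of_nonneg hη.le]
    _ ≤ η * (‖f' x - f' z‖ + ‖g' u - g' v‖) := by
      rw [norm_sub_rev (f' x), norm_sub_rev (g' u)]
      gcongr
      exact norm_add_le _ _
    _ ≤ η * (Lf * ‖x - z‖ + Lg * ‖u - v‖) := by gcongr <;> apply_assumption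
    _ ≤ η * (Lf * ‖x - z‖ + Lg * (‖(u - x) - (v - z)‖ + ‖x - z‖)) := by gcongr
  rw [div_mul_eq_mul_div, le_div_iff₀ (by linarith)]
  nlinarith

theorem stmt_17
    (H : Type*) [NormedAddCommGroup H] [InnerProductSpace ℝ H] [FiniteDimensional ℝ H]
    (f g : H → ℝ) (f' g' : H → H) (Lf Lg : ℝ) (hLf : 0 < Lf) (hLg : 0 < Lg)
    (hf : ∀ y, HasGradientAt f (f' y) y) (hg : ∀ y, HasGradientAt g (g' y) y)
    (hf_lip : ∀ y z, ‖f' y - f' z‖ ≤ Lf * ‖y - z‖)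
    (hg_lip : ∀ y z, ‖g' y - g' z‖ ≤ Lg * ‖y - z‖)
    (η : ℝ) (hη : 0 < η) (hη' : η < 1 / Lg)
    (x z u v : H)
    (hu : ∀ w, g u + 1 / (2 * η) * ‖u - (x - η • f' x)‖ ^ 2 ≤
      g w + 1 / (2 * η) * ‖w - (x - η • f' x)‖ ^ 2)
    (hv : ∀ w, g v + 1 / (2 * η) * ‖v - (z - η • f' z)‖ ^ 2 ≤
      g w + 1 / (2 * η) * ‖w - (z - η • f' z)‖ ^ 2) :
    ‖(u - x) - (v - z)‖ ≤ η * (Lf + Lg) / (1 - η * Lg) * ‖x - z‖ :=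
  stmt_17_general H g f' g' Lf Lg hg hf_lip hg_lip η hη hη' x z u v hu hv
end
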